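/- Let P be an affine space of dimension n ≥ 3 over the two-element field GF(2). For all lines a₁, a₂ of P with a₁ ≠ a₂ the following are equivalent: (i) a₁ ∩ a₂ = ∅; (ii) there exist lines b₁, b₂ with b₁ ≠ b₂ such that for each i ∈ {1,2}: bᵢ ∼ a₁, bᵢ ∼ a₂ and bᵢ ∩ a₁ ≠ bᵢ ∩ a₂ (i.e. bᵢ meets a₁ and a₂ in two distinct points). -/

import Mathlib

/-!
Over GF(2) a line is just a pair of distinct points. If `a₁ = {p, q}` and `a₂` are disjoint and
`r ∈ a₂`, the lines `pr` and `qr` both meet `a₁` and `a₂` in distinct points. If instead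
`a₁ = {x, p}` and `a₂ = {x, r}` share the point `x`, a line `b` meeting both in distinct points
cannot pass through `x` (otherwise both intersections would be `{x}`), so it passes through `p`
and `r`; hence `b` is the line `pr`, and there is only one such line.
-/

/-- `a` is an affine line: a nonempty affine subspace whose direction has finrank 1. -/
def ALine (K : Type*) {V P : Type*} [DivisionRing K] [AddCommGroup V] [Module K V]
    [AddTorsor V P] (a : AffineSubspace K P) : Prop :=
  (a : Set P).Nonempty ∧ Module.finrank K a.direction = 1

/-- `a` is an affine plane: a nonempty affine subspace whose direction has finrank 2. -/
def APlane (K : Type*) {V P : Type*} [DivisionRing K] [AddCommGroup V] [Module K V]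
    [AddTorsor V P] (a : AffineSubspace K P) : Prop :=
  (a : Set P).Nonempty ∧ Module.finrank K a.direction = 2

/-- Two lines intersect: they are different and have a common point. -/
def AMeets {K V P : Type*} [DivisionRing K] [AddCommGroup V] [Module K V]
    [AddTorsor V P] (a b : AffineSubspace K P) : Prop :=
  a ≠ b ∧ ((a : Set P) ∩ (b : Set P)).Nonempty

/-- `x` meets the lines `y` and `z` in two distinct points. -/
def AMeetsTwo {K V P : Type*} [DivisionRing K] [AddCommGroup V] [Module K V]
    [AddTorsor V P] (x y z : AffineSubspace K P) : Prop :=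
  AMeets x y ∧ AMeets x z ∧ x ⊓ y ≠ x ⊓ z

section DivisionRing

variable {K V P : Type*} [DivisionRing K] [AddCommGroup V] [Module K V] [AddTorsor V P]
  {a b : AffineSubspace K P} {p q x z : P}

theorem aLine_affineSpan_pair (h : p ≠ q) : ALine K line[K, p, q] :=
  ⟨⟨p, left_mem_affineSpan_pair K p q⟩, by
    rw [direction_affineSpan, vectorSpan_pair]
    exact finrank_span_singleton (vsub_ne_zero.mpr h)⟩

theorem ALine.eq_affineSpan_pair (ha : ALine K a) (hp : p ∈ a) (hq : q ∈ a) (hpq : p ≠ q) :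
    a = line[K, p, q] := by
  have hle : line[K, p, q] ≤ a := affineSpan_pair_le_of_mem_of_mem hp hq
  have : FiniteDimensional K a.direction := Module.finite_of_finrank_eq_succ ha.2
  refine (AffineSubspace.eq_of_direction_eq_of_nonempty_of_le ?_
    ⟨p, left_mem_affineSpan_pair K p q⟩ hle).symm
  exact Submodule.eq_of_le_of_finrank_eq (AffineSubspace.direction_le hle)
    (by rw [(aLine_affineSpan_pair hpq).2, ha.2])

theorem ALine.exists_ne_mem (ha : ALine K a) (hp : p ∈ a) : ∃ q ∈ a, q ≠ p := by
  obtain ⟨v, hv0, -⟩ := finrank_eq_one_iff'.mp ha.2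
  refine ⟨(v : V) +ᵥ p, AffineSubspace.vadd_mem_of_mem_direction v.2 hp, fun h => hv0 ?_⟩
  rw [← vsub_eq_zero_iff_eq, vadd_vsub] at h
  exact Subtype.ext h

theorem ALine.mem_inf_iff_eq (ha : ALine K a) (hb : ALine K b) (hab : a ≠ b)
    (hxa : x ∈ a) (hxb : x ∈ b) : z ∈ a ⊓ b ↔ z = x := by
  refine ⟨fun ⟨hza, hzb⟩ => by_contra fun hzx => hab ?_, fun h => h ▸ ⟨hxa, hxb⟩⟩
  rw [ha.eq_affineSpan_pair hza hxa hzx, hb.eq_affineSpan_pair hzb hxb hzx]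

theorem AMeetsTwo.notMem_of_mem_inf {a₁ a₂ : AffineSubspace K P} (hb : ALine K b)
    (ha₁ : ALine K a₁) (ha₂ : ALine K a₂) (h : AMeetsTwo b a₁ a₂) (hx₁ : x ∈ a₁)
    (hx₂ : x ∈ a₂) : x ∉ b := by
  intro hxb
  apply h.2.2
  ext z
  rw [hb.mem_inf_iff_eq ha₁ h.1.1 hxb hx₁, hb.mem_inf_iff_eq ha₂ h.2.1.1 hxb hx₂]

theorem aMeetsTwo_affineSpan_pair {a₁ a₂ : AffineSubspace K P}
    (hdisj : Disjoint (a₁ : Set P) a₂) (hp : p ∈ a₁) (hq : q ∈ a₂) :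
    AMeetsTwo line[K, p, q] a₁ a₂ := by
  have hpb := left_mem_affineSpan_pair K p q
  have hqb := right_mem_affineSpan_pair K p q
  have hp₂ : p ∉ a₂ := hdisj.notMem_of_mem_left hp
  refine ⟨⟨?_, p, hpb, hp⟩, ⟨?_, q, hqb, hq⟩, fun h => hp₂ ?_⟩
  · rintro rfl
    exact hdisj.notMem_of_mem_right hq hqb
  · rintro rfl
    exact hp₂ hpb
  · exact (h ▸ ⟨hpb, hp⟩ : p ∈ line[K, p, q] ⊓ a₂).2

end DivisionRing

section GF2

variable {V P : Type*} [AddCommGroup V] [Module (ZMod 2) V] [AddTorsor V P]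
  {b : AffineSubspace (ZMod 2) P} {p r x : P}

theorem coe_affineSpan_pair_zmod_two (p q : P) :
    (line[ZMod 2, p, q] : Set P) = {p, q} := by
  ext z
  rw [SetLike.mem_coe, mem_affineSpan_pair_iff_exists_lineMap_eq]
  constructor
  · rintro ⟨c, rfl⟩
    fin_cases c
    · exact Or.inl (AffineMap.lineMap_apply_zero p q)
    · exact Or.inr (AffineMap.lineMap_apply_one p q)
  · rintro (rfl | rfl)
    exacts [⟨0, AffineMap.lineMap_apply_zero z q⟩, ⟨1, AffineMap.lineMap_apply_one p z⟩]

theorem AMeets.mem_of_notMem (h : AMeets b line[ZMod 2, x, p]) (hx : x ∉ b) : p ∈ b := by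
  obtain ⟨-, u, hub, hu⟩ := h
  rw [SetLike.mem_coe, ← SetLike.mem_coe, coe_affineSpan_pair_zmod_two] at hu
  rcases hu with rfl | rfl
  exacts [absurd hub hx, hub]

theorem AMeetsTwo.eq_affineSpan_pair (h : AMeetsTwo b line[ZMod 2, x, p] line[ZMod 2, x, r])
    (hb : ALine (ZMod 2) b) (hpx : p ≠ x) (hrx : r ≠ x) (hpr : p ≠ r) :
    b = line[ZMod 2, p, r] := by
  have hxb := h.notMem_of_mem_inf hb (aLine_affineSpan_pair hpx.symm)
    (aLine_affineSpan_pair hrx.symm) (left_mem_affineSpan_pair _ x p)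
    (left_mem_affineSpan_pair _ x r)
  exact hb.eq_affineSpan_pair (h.1.mem_of_notMem hxb) (h.2.1.mem_of_notMem hxb) hpr

end GF2

theorem statement14_general {V P : Type*} [AddCommGroup V] [Module (ZMod 2) V] [AddTorsor V P]
    (a₁ a₂ : AffineSubspace (ZMod 2) P)
    (ha₁ : ALine (ZMod 2) a₁) (ha₂ : ALine (ZMod 2) a₂) (hne : a₁ ≠ a₂) :
    ((a₁ : Set P) ∩ (a₂ : Set P) = ∅) ↔
    (∃ b₁ b₂ : AffineSubspace (ZMod 2) P, ALine (ZMod 2) b₁ ∧ ALine (ZMod 2) b₂ ∧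
      b₁ ≠ b₂ ∧ AMeetsTwo b₁ a₁ a₂ ∧ AMeetsTwo b₂ a₁ a₂) := by
  constructor
  · intro hinter
    have hdisj := Set.disjoint_iff_inter_eq_empty.mpr hinter
    obtain ⟨p, hp⟩ := ha₁.1
    obtain ⟨q, hq, hqp⟩ := ha₁.exists_ne_mem hp
    obtain ⟨r, hr⟩ := ha₂.1
    have hqr : q ≠ r := fun h => hdisj.notMem_of_mem_left hq (h ▸ hr)
    refine ⟨line[ZMod 2, p, r], line[ZMod 2, q, r],
      aLine_affineSpan_pair fun h => hdisj.notMem_of_mem_left hp (h ▸ hr),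
      aLine_affineSpan_pair hqr, fun h => ?_,
      aMeetsTwo_affineSpan_pair hdisj hp hr, aMeetsTwo_affineSpan_pair hdisj hq hr⟩
    have hq' : q ∈ (line[ZMod 2, p, r] : Set P) := h ▸ left_mem_affineSpan_pair _ q r
    rw [coe_affineSpan_pair_zmod_two] at hq'
    exact hq'.elim hqp hqr
  · rintro ⟨b₁, b₂, hb₁, hb₂, hb, h₁, h₂⟩
    by_contra hinter
    obtain ⟨x, hx₁, hx₂⟩ := Set.nonempty_iff_ne_empty.mpr hinter
    obtain ⟨p, hp, hpx⟩ := ha₁.exists_ne_mem hx₁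
    obtain ⟨r, hr, hrx⟩ := ha₂.exists_ne_mem hx₂
    rw [ha₁.eq_affineSpan_pair hx₁ hp hpx.symm] at h₁ h₂ hne
    rw [ha₂.eq_affineSpan_pair hx₂ hr hrx.symm] at h₁ h₂ hne
    have hpr : p ≠ r := by
      rintro rfl
      exact hne rfl
    exact hb ((h₁.eq_affineSpan_pair hb₁ hpx hrx hpr).trans
      (h₂.eq_affineSpan_pair hb₂ hpx hrx hpr).symm)

theorem statement14 {V P : Type*} [AddCommGroup V] [Module (ZMod 2) V] [AddTorsor V P]
    {n : ℕ} (hn : 3 ≤ n) (hdim : Module.finrank (ZMod 2) V = n)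
    (a₁ a₂ : AffineSubspace (ZMod 2) P)
    (ha₁ : ALine (ZMod 2) a₁) (ha₂ : ALine (ZMod 2) a₂) (hne : a₁ ≠ a₂) :
    ((a₁ : Set P) ∩ (a₂ : Set P) = ∅) ↔
    (∃ b₁ b₂ : AffineSubspace (ZMod 2) P, ALine (ZMod 2) b₁ ∧ ALine (ZMod 2) b₂ ∧
      b₁ ≠ b₂ ∧ AMeetsTwo b₁ a₁ a₂ ∧ AMeetsTwo b₂ a₁ a₂) :=
  statement14_general (V := V) a₁ a₂ ha₁ ha₂ hne
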